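/- With C, Xᵢ, Cᵢ as above (objects of C generated by X₁ ∪ ⋯ ∪ Xₙ, with xᵢ ⊗ xⱼ ≅ xⱼ ⊗ xᵢ for xᵢ ∈ Xᵢ, xⱼ ∈ Xⱼ, i ≠ j), the canonical functor F : C₁ ⊗ ⋯ ⊗ Cₙ → C is essentially surjective on objects: every object of C is isomorphic to a tensor product c₁ ⊗ ⋯ ⊗ cₙ with cᵢ an object of Cᵢ. -/

import Mathlib

/-!
Label each factor of a word in the generators by a colour `i` with the factor in `X i`. Reading
the word from the right, insert each factor `x` of colour `i` into the `i`-th slot of the tensor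
product of the colour classes built so far: on its way `x` passes only the classes of colours
`j < i`, and it commutes with each of them because it commutes with each of their factors.
-/

open CategoryTheory MonoidalCategory

/-- The tensor product of a list of objects in a monoidal category. -/
def listTensor {C : Type*} [Category C] [MonoidalCategory C] (l : List C) : C :=
  l.foldr (· ⊗ ·) (𝟙_ C)

theorem List.ofFn_update_eq_modify {α : Type*} {n : ℕ} (f : Fin n → α) (i : Fin n)
    (g : α → α) : List.ofFn (Function.update f i (g (f i))) = (List.ofFn f).modify i g := by
  refine List.ext_getElem (by simp) fun j h₁ h₂ => ?_
  rcases eq_or_ne j i with rfl | h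
  · simp
  · have : (⟨j, by simpa using h₁⟩ : Fin n) ≠ i := Fin.ne_of_val_ne h
    simp [Function.update_of_ne this, Ne.symm h]

theorem List.exists_labelling {α β : Type*} {P : β → α → Prop} :
    ∀ {l : List α}, (∀ x ∈ l, ∃ b, P b x) →
      ∃ p : List (β × α), p.map Prod.snd = l ∧ ∀ q ∈ p, P q.1 q.2
  | [], _ => ⟨[], rfl, by simp⟩
  | x :: l, h => by
    obtain ⟨b, hb⟩ := h x List.mem_cons_self
    obtain ⟨p, rfl, hp⟩ := List.exists_labelling fun y hy => h y (List.mem_cons_of_mem _ hy)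
    exact ⟨(b, x) :: p, rfl, by simpa [hb] using hp⟩

def colourFactors {α : Type*} {n : ℕ} (p : List (Fin n × α)) (i : Fin n) : List α :=
  (p.filter (·.1 = i)).map Prod.snd

theorem mem_of_mem_colourFactors {α : Type*} {n : ℕ} {X : Fin n → Set α} {p : List (Fin n × α)}
    (hp : ∀ q ∈ p, q.2 ∈ X q.1) {i : Fin n} {y : α} (hy : y ∈ colourFactors p i) : y ∈ X i := by
  obtain ⟨q, hq, rfl⟩ := List.mem_map.1 hy
  obtain ⟨hqp, hqi⟩ := List.mem_filter.1 hq
  obtain rfl : q.1 = i := by simpa using hqi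
  exact hp q hqp

section

variable {C : Type*} [Category C] [MonoidalCategory C] {n : ℕ}

@[simp]
theorem listTensor_cons (x : C) (l : List C) : listTensor (x :: l) = x ⊗ listTensor l := rfl

def listTensorReplicateUnitIso : ∀ m : ℕ, listTensor (List.replicate m (𝟙_ C)) ≅ 𝟙_ C
  | 0 => Iso.refl _
  | m + 1 => whiskerLeftIso _ (listTensorReplicateUnitIso m) ≪≫ λ_ _

theorem nonempty_tensor_listTensor_comm {x : C} :
    ∀ {l : List C}, (∀ y ∈ l, Nonempty (x ⊗ y ≅ y ⊗ x)) →
      Nonempty (x ⊗ listTensor l ≅ listTensor l ⊗ x)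
  | [], _ => ⟨ρ_ x ≪≫ (λ_ x).symm⟩
  | y :: l, h => by
    obtain ⟨e⟩ := nonempty_tensor_listTensor_comm fun z hz => h z (List.mem_cons_of_mem _ hz)
    obtain ⟨f⟩ := h y List.mem_cons_self
    exact ⟨(α_ x y _).symm ≪≫ whiskerRightIso f _ ≪≫ α_ y x _ ≪≫ whiskerLeftIso y e ≪≫
      (α_ y _ x).symm⟩

theorem nonempty_tensor_listTensor_iso_modify {x : C} :
    ∀ {l : List C} {i : ℕ} (hi : i < l.length),
      (∀ (j : ℕ) (hj : j < i), Nonempty (x ⊗ l[j]'(hj.trans hi) ≅ l[j]'(hj.trans hi) ⊗ x)) →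
      Nonempty (x ⊗ listTensor l ≅ listTensor (l.modify i (x ⊗ ·)))
  | y :: l, 0, _, _ => ⟨(α_ x y _).symm⟩
  | y :: l, i + 1, hi, h => by
    obtain ⟨f⟩ := h 0 i.succ_pos
    obtain ⟨e⟩ := nonempty_tensor_listTensor_iso_modify (l := l) (i := i)
      (by simpa using hi) fun j hj => h (j + 1) (by omega)
    exact ⟨(α_ x y _).symm ≪≫ whiskerRightIso f _ ≪≫ α_ y x _ ≪≫ whiskerLeftIso y e⟩

def colourClass (p : List (Fin n × C)) (i : Fin n) : C :=
  listTensor (colourFactors p i)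

theorem colourClass_nil : colourClass ([] : List (Fin n × C)) = fun _ => 𝟙_ C := rfl

theorem colourClass_cons (i : Fin n) (x : C) (p : List (Fin n × C)) :
    colourClass ((i, x) :: p) = Function.update (colourClass p) i (x ⊗ colourClass p i) := by
  funext j
  by_cases h : i = j
  · subst h; simp [colourClass, colourFactors]
  · simp [colourClass, colourFactors, h, Function.update_of_ne (Ne.symm h)]

theorem nonempty_iso_listTensor_ofFn_colourClass (X : Fin n → Set C)
    (hswap : ∀ i j : Fin n, i ≠ j → ∀ x ∈ X i, ∀ y ∈ X j, Nonempty (x ⊗ y ≅ y ⊗ x)) :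
    ∀ {p : List (Fin n × C)}, (∀ q ∈ p, q.2 ∈ X q.1) →
      Nonempty (listTensor (p.map Prod.snd) ≅ listTensor (List.ofFn (colourClass p)))
  | [], _ => by
    rw [colourClass_nil, List.ofFn_const]
    exact ⟨(listTensorReplicateUnitIso n).symm⟩
  | (i, x) :: p, hp => by
    have hp' : ∀ q ∈ p, q.2 ∈ X q.1 := fun q hq => hp q (List.mem_cons_of_mem _ hq)
    obtain ⟨e⟩ := nonempty_iso_listTensor_ofFn_colourClass X hswap hp'
    have hcomm : ∀ j : Fin n, j ≠ i → Nonempty (x ⊗ colourClass p j ≅ colourClass p j ⊗ x) :=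
      fun j hji => nonempty_tensor_listTensor_comm fun y hy =>
        hswap i j hji.symm x (hp _ List.mem_cons_self) y (mem_of_mem_colourFactors hp' hy)
    obtain ⟨m⟩ := nonempty_tensor_listTensor_iso_modify (l := List.ofFn (colourClass p))
      (i := i) (by simp) fun j hj => by
        simpa using hcomm ⟨j, by omega⟩ (Fin.ne_of_lt hj)
    rw [colourClass_cons, List.ofFn_update_eq_modify]
    exact ⟨whiskerLeftIso x e ≪≫ m⟩

end

theorem stmt_11_general
    (C : Type*) [Category C] [MonoidalCategory C]
    (n : ℕ) (X : Fin n → Set C)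
    (hgen : ∀ c : C, ∃ l : List C, (∀ x ∈ l, ∃ i, x ∈ X i) ∧ c = listTensor l)
    (hswap : ∀ i j : Fin n, i ≠ j → ∀ x ∈ X i, ∀ y ∈ X j,
      Nonempty ((x ⊗ y : C) ≅ (y ⊗ x : C))) :
    ∀ c : C, ∃ cs : Fin n → C,
      (∀ i, ∃ l : List C, (∀ x ∈ l, x ∈ X i) ∧ cs i = listTensor l) ∧
      Nonempty (c ≅ listTensor (List.ofFn cs)) := by
  intro c
  obtain ⟨l, hl, rfl⟩ := hgen c
  obtain ⟨p, rfl, hp⟩ := List.exists_labelling hl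
  exact ⟨colourClass p, fun i => ⟨_, fun _ => mem_of_mem_colourFactors hp, rfl⟩,
    nonempty_iso_listTensor_ofFn_colourClass X hswap hp⟩

/-- With `C` a strict `k`-linear monoidal category whose objects
are generated by `X₁ ∪ ⋯ ∪ Xₙ`, and `xᵢ ⊗ xⱼ ≅ xⱼ ⊗ xᵢ` for `xᵢ ∈ Xᵢ`,
`xⱼ ∈ Xⱼ`, `i ≠ j`, every object of `C` is isomorphic to a tensor product
`c₁ ⊗ ⋯ ⊗ cₙ` with each `cᵢ` an object of the subcategory `Cᵢ` generated by
`Xᵢ`; i.e., the canonical functor is essentially surjective on objects. -/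
theorem stmt_11 (k : Type*) [CommRing k]
    (C : Type*) [Category C] [MonoidalCategory C] [Preadditive C] [Linear k C]
    (n : ℕ) (X : Fin n → Set C)
    (hgen : ∀ c : C, ∃ l : List C, (∀ x ∈ l, ∃ i, x ∈ X i) ∧ c = listTensor l)
    (hswap : ∀ i j : Fin n, i ≠ j → ∀ x ∈ X i, ∀ y ∈ X j,
      Nonempty ((x ⊗ y : C) ≅ (y ⊗ x : C))) :
    ∀ c : C, ∃ cs : Fin n → C,
      (∀ i, ∃ l : List C, (∀ x ∈ l, x ∈ X i) ∧ cs i = listTensor l) ∧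
      Nonempty (c ≅ listTensor (List.ofFn cs)) :=
  stmt_11_general C n X hgen hswap
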